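/- arXiv:1903.09406 — 3 statements merged into one kernel-verified Lean document; each statement's English description precedes it below -/
import Mathlib

section
/- (Confluence Lemma) Let E be a row-finite graph, F_E the free commutative monoid on E^0, → the reflexive-transitive closure of the one-step rewriting relation, and ~ the congruence on F_E generated by →. For nonzero a, b ∈ F_E, a ~ b if and only if there exists nonzero c ∈ F_E with a → c and b → c. -/
set_option linter.unusedSectionVars false

/-- The algebraic preorder on a commutative monoid: `a ≤ b` iff `b = a + c` for some `c`. -/
def algLE {M : Type*} [AddCommMonoid M] (a b : M) : Prop := ∃ c, b = a + c

/-- A row-finite directed graph: vertices `V`, edges `Ed`, source `s`, range `r`,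
and for each vertex the (finite) set of edges it emits. -/
structure RFGraph (V : Type) (Ed : Type) where
  s : Ed → V
  r : Ed → V
  emit : V → Finset Ed
  mem_emit : ∀ e v, e ∈ emit v ↔ s e = v

namespace RFGraph

variable {V Ed : Type} [DecidableEq V] (G : RFGraph V Ed)

/-- The one-step rewriting relation `→₁` on the free commutative monoid `Multiset V`:
replace one occurrence of a non-sink vertex `v` by the sum of ranges of edges emitted by `v`. -/
def Step1 (a b : Multiset V) : Prop :=
  ∃ v : V, v ∈ a ∧ G.emit v ≠ ∅ ∧ b = a.erase v + (G.emit v).val.map G.r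

/-- The reflexive-transitive closure `→` of `→₁`. -/
def Step : Multiset V → Multiset V → Prop := Relation.ReflTransGen G.Step1

/-- The congruence on the free commutative monoid generated by `→₁`. -/
def gcon : AddCon (Multiset V) := addConGen G.Step1

/-- The graph monoid `M_E`. -/
def GM := G.gcon.Quotient

instance : AddCommMonoid G.GM := inferInstanceAs (AddCommMonoid G.gcon.Quotient)

/-- One-step rewriting for the talented monoid: replace `v(i)` by `Σ_{e ∈ s⁻¹(v)} r(e)(i+1)`. -/
def TStep1 (a b : Multiset (V × ℤ)) : Prop :=
  ∃ (v : V) (i : ℤ), (v, i) ∈ a ∧ G.emit v ≠ ∅ ∧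
    b = a.erase (v, i) + (G.emit v).val.map (fun e => (G.r e, i + 1))

/-- The congruence generated by the talented one-step relation. -/
def tcon : AddCon (Multiset (V × ℤ)) := addConGen G.TStep1

/-- The talented monoid `M_E^{gr}`. -/
def TM := G.tcon.Quotient

instance : AddCommMonoid G.TM := inferInstanceAs (AddCommMonoid G.tcon.Quotient)

/-- The generator `v(i)` of the talented monoid. -/
def tgen (v : V) (i : ℤ) : G.TM := G.tcon.mk' {(v, i)}

/-- The shift `v(i) ↦ v(i+n)` on the free commutative monoid `Multiset (V × ℤ)`. -/
def shiftMul (n : ℤ) : Multiset (V × ℤ) →+ Multiset (V × ℤ) where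
  toFun a := a.map fun p => (p.1, p.2 + n)
  map_zero' := rfl
  map_add' a b := Multiset.map_add (fun p => (p.1, p.2 + n)) a b

lemma shift_inj (n : ℤ) : Function.Injective (fun p : V × ℤ => (p.1, p.2 + n)) := by
  rintro ⟨a, b⟩ ⟨c, d⟩ h
  simp only [Prod.mk.injEq] at h
  exact Prod.ext h.1 (by omega)

lemma tstep1_shift (n : ℤ) {a b : Multiset (V × ℤ)} (h : G.TStep1 a b) :
    G.TStep1 (shiftMul n a) (shiftMul n b) := by
  obtain ⟨v, i, hv, hne, rfl⟩ := h
  refine ⟨v, i + n, Multiset.mem_map.2 ⟨(v, i), hv, rfl⟩, hne, ?_⟩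
  show Multiset.map _ _ = _
  rw [Multiset.map_add]
  congr 1
  · exact (Multiset.map_erase _ (shift_inj n) (v, i) a)
  · rw [Multiset.map_map]
    congr 1
    funext e
    simp only [Function.comp_apply]
    congr 1
    omega

lemma tcon_shift (n : ℤ) {a b : Multiset (V × ℤ)} (h : G.tcon a b) :
    G.tcon (shiftMul n a) (shiftMul n b) := by
  have hle : addConGen G.TStep1 ≤
      { r := fun a b => G.tcon (shiftMul n a) (shiftMul n b)
        iseqv := ⟨fun _ => G.tcon.refl _, fun h => G.tcon.symm h,
          fun h₁ h₂ => G.tcon.trans h₁ h₂⟩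
        add' := fun h₁ h₂ => by
          simpa only [map_add] using G.tcon.add h₁ h₂ } := by
    refine AddCon.addConGen_le.2 fun x y hxy => ?_
    exact AddConGen.Rel.of _ _ (G.tstep1_shift n hxy)
  exact hle h

/-- The `ℤ`-action on the talented monoid, `ⁿ(v(i)) = v(i+n)`. -/
def tshift (n : ℤ) : G.TM →+ G.TM :=
  G.tcon.lift (G.tcon.mk'.comp (shiftMul n)) (by
    intro a b h
    show G.tcon.mk' (shiftMul n a) = G.tcon.mk' (shiftMul n b)
    exact (AddCon.eq _).2 (G.tcon_shift n h))

/-- Reachability: there is a (possibly trivial) path from `u` to `v`. -/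
def Reaches (u v : V) : Prop :=
  Relation.ReflTransGen (fun a b => ∃ e : Ed, G.s e = a ∧ G.r e = b) u v

/-- A cycle: a nonempty path of edges, closed up, with distinct source vertices. -/
def IsCycle (p : List Ed) : Prop :=
  ∃ h : p ≠ [], List.Chain' (fun e f => G.r e = G.s f) p ∧
    G.r (p.getLast h) = G.s (p.head h) ∧ (p.map G.s).Nodup

/-- The cycle `p` has an exit: some vertex on it emits an edge not on the cycle. -/
def HasExit (p : List Ed) : Prop :=
  ∃ e : Ed, (∃ f ∈ p, G.s e = G.s f) ∧ e ∉ p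

/-- The cycle `p` has no exit: every vertex on it emits exactly its cycle edge. -/
def NoExit (p : List Ed) : Prop :=
  ∀ e ∈ p, G.emit (G.s e) = {e}

/-- `ℤ`-order-ideals of the talented monoid. -/
def IsOrderIdeal (I : Set G.TM) : Prop :=
  (0 : G.TM) ∈ I ∧ (∀ a b : G.TM, a ∈ I → b ∈ I → a + b ∈ I) ∧
    (∀ (n : ℤ) (a : G.TM), a ∈ I → G.tshift n a ∈ I) ∧
    (∀ a b : G.TM, algLE a b → b ∈ I → a ∈ I)

/-- The smallest `ℤ`-order-ideal of `M_E^{gr}` containing `v(0)`. -/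
def genIdeal (v : V) : Set G.TM :=
  ⋂₀ {I : Set G.TM | G.IsOrderIdeal I ∧ G.tgen v 0 ∈ I}

/-- Minimality in the talented monoid: `0 ≠ b ≤ a` implies `a ≤ b`. -/
def TMin (a : G.TM) : Prop := ∀ b : G.TM, b ≠ 0 → algLE b a → algLE a b

/-- The covering graph `\bar E`. -/
def cover : RFGraph (V × ℤ) (Ed × ℤ) where
  s p := (G.s p.1, p.2)
  r p := (G.r p.1, p.2 + 1)
  emit p := (G.emit p.1).map ⟨fun e => (e, p.2), fun a b h => by
    simpa using congrArg Prod.fst h⟩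
  mem_emit := by
    rintro ⟨e, n⟩ ⟨v, m⟩
    simp only [Finset.mem_map, Function.Embedding.coeFn_mk, Prod.mk.injEq, G.mem_emit]
    constructor
    · rintro ⟨a, ha, rfl, rfl⟩; exact ⟨ha, rfl⟩
    · rintro ⟨rfl, rfl⟩; exact ⟨e, rfl, rfl⟩

/-- The set of vertices on a cycle. -/
def cycVerts (p : List Ed) : Set V := {v | ∃ e ∈ p, G.s e = v}

end RFGraph

/-!
A rewrite `→₁` touches a single occurrence of a vertex, so two rewrites of different occurrences
commute and `→₁` has the diamond property. Hence, by Church–Rosser, "having a common `→`-descendant"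
is an equivalence relation; it is additive, so it is a congruence containing `→₁` and therefore
contains `~`. The common descendant is nonzero because a non-sink emits at least one edge.
-/

namespace RFGraph

variable {V Ed : Type} [DecidableEq V] {G : RFGraph V Ed}

lemma Step1.ne_zero {a b : Multiset V} (h : G.Step1 a b) : b ≠ 0 := by
  obtain ⟨v, -, hv, rfl⟩ := h
  simp [hv]

lemma Step.ne_zero {a b : Multiset V} (h : G.Step a b) (ha : a ≠ 0) : b ≠ 0 := by
  induction h with
  | refl => exact ha
  | tail _ h _ => exact h.ne_zero

lemma Step1.add_right {a b : Multiset V} (h : G.Step1 a b) (x : Multiset V) :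
    G.Step1 (a + x) (b + x) := by
  obtain ⟨v, hva, hv, rfl⟩ := h
  refine ⟨v, Multiset.mem_add.2 (Or.inl hva), hv, ?_⟩
  rw [Multiset.erase_add_left_pos x hva, add_right_comm]

lemma Step.add_right {a b : Multiset V} (h : G.Step a b) (x : Multiset V) :
    G.Step (a + x) (b + x) :=
  Relation.ReflTransGen.lift (· + x) (fun _ _ (h : G.Step1 _ _) => h.add_right x) _ _ h

lemma Step.add {a b a' b' : Multiset V} (h : G.Step a b) (h' : G.Step a' b') :
    G.Step (a + a') (b + b') := by
  have h₁ : G.Step (a + a') (b + a') := h.add_right a'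
  have h₂ : G.Step (b + a') (b + b') := by simpa only [add_comm b] using h'.add_right b
  exact Relation.ReflTransGen.trans h₁ h₂

lemma Step.to_gcon {a b : Multiset V} (h : G.Step a b) : G.gcon a b := by
  induction h with
  | refl => exact G.gcon.refl _
  | tail _ h ih => exact G.gcon.trans ih (AddConGen.Rel.of _ _ h)

lemma step1_diamond {a b c : Multiset V} (hab : G.Step1 a b) (hac : G.Step1 a c) :
    ∃ d, Relation.ReflGen G.Step1 b d ∧ Relation.ReflGen G.Step1 c d := by
  obtain ⟨v, hva, hv, rfl⟩ := hab
  obtain ⟨w, hwa, hw, rfl⟩ := hac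
  obtain rfl | hvw := eq_or_ne v w
  · exact ⟨_, .refl, .refl⟩
  have hw' : w ∈ a.erase v := (Multiset.mem_erase_of_ne hvw.symm).2 hwa
  have hv' : v ∈ a.erase w := (Multiset.mem_erase_of_ne hvw).2 hva
  refine ⟨(a.erase v).erase w + (G.emit v).val.map G.r + (G.emit w).val.map G.r,
    .single ⟨w, Multiset.mem_add.2 (Or.inl hw'), hw, ?_⟩,
    .single ⟨v, Multiset.mem_add.2 (Or.inl hv'), hv, ?_⟩⟩
  · rw [Multiset.erase_add_left_pos _ hw']
  · rw [Multiset.erase_add_left_pos _ hv', Multiset.erase_comm, add_right_comm]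

variable (G) in
def joinCon : AddCon (Multiset V) where
  r := Relation.Join G.Step
  iseqv := Relation.equivalence_join_reflTransGen fun _ _ _ hb hc =>
    (step1_diamond hb hc).imp fun _ ⟨hbd, hcd⟩ => ⟨hbd, hcd.to_reflTransGen⟩
  add' := fun ⟨c, hac, hbc⟩ ⟨c', hac', hbc'⟩ => ⟨c + c', hac.add hac', hbc.add hbc'⟩

lemma gcon_iff_join {a b : Multiset V} : G.gcon a b ↔ Relation.Join G.Step a b := by
  refine ⟨fun h => ?_, fun ⟨c, hac, hbc⟩ => G.gcon.trans hac.to_gcon (G.gcon.symm hbc.to_gcon)⟩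
  have hle : G.gcon ≤ G.joinCon :=
    AddCon.addConGen_le.2 fun _ y hxy => ⟨y, .single hxy, .refl⟩
  exact hle h

end RFGraph

theorem confluence_general {V Ed : Type} [DecidableEq V] (G : RFGraph V Ed)
    (a b : Multiset V) (ha : a ≠ 0) :
    G.gcon a b ↔ ∃ c : Multiset V, c ≠ 0 ∧ G.Step a c ∧ G.Step b c := by
  rw [G.gcon_iff_join]
  exact ⟨fun ⟨c, hac, hbc⟩ => ⟨c, hac.ne_zero ha, hac, hbc⟩,
    fun ⟨c, _, hac, hbc⟩ => ⟨c, hac, hbc⟩⟩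

/-- (The Confluence Lemma) For nonzero `a, b` in the free commutative monoid on `E⁰`,
`a = b` holds in the graph monoid `M_E` if and only if there is a nonzero `c` with
`a → c` and `b → c`. -/
theorem confluence {V Ed : Type} [DecidableEq V] (G : RFGraph V Ed)
    (a b : Multiset V) (ha : a ≠ 0) (hb : b ≠ 0) :
    G.gcon a b ↔ ∃ c : Multiset V, c ≠ 0 ∧ G.Step a c ∧ G.Step b c :=
  confluence_general G a b ha
end

section
/- Let E be a row-finite graph and M_E^{gr} its talented monoid with ℤ-action ^n(v(i)) = v(i+n) and algebraic preorder a ≤ b iff ∃c, b = a + c. For any a ∈ M_E^{gr} and any negative integer n, it is not the case that ^n a < a (i.e., it is impossible that a = ^n a + x with x ≠ 0). -/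
set_option linter.unusedSectionVars false

/-!
Weigh a generator `v(i)` at level `k` by the number of vertices obtained from `v` by expanding
it `k - i` times, keeping sinks. Once `k > i`, the rewriting step `v(i) ↦ Σ r(e)(i+1)` preserves
this weight, so congruent multisets have weights that agree for all large `k`: the weight is an
additive map from `M_E^{gr}` to germs at `+∞` of `ℕ`-valued functions. A downward shift can only
raise every weight, and a nonzero element has weight at least `1`, so `a = ⁿa + x` with `n < 0`
and `x ≠ 0` would give `w a ≥ w a + 1`.
-/

open Filter

namespace RFGraph

variable {V Ed : Type} (G : RFGraph V Ed)

def leafCount : ℕ → V → ℕ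
  | 0, _ => 1
  | t + 1, v => if (G.emit v).Nonempty then ∑ e ∈ G.emit v, leafCount t (G.r e) else 1

lemma leafCount_succ_of_ne_empty {v : V} (hv : G.emit v ≠ ∅) (t : ℕ) :
    G.leafCount (t + 1) v = ∑ e ∈ G.emit v, G.leafCount t (G.r e) := by
  rw [leafCount, if_pos (Finset.nonempty_iff_ne_empty.2 hv)]

lemma one_le_leafCount (t : ℕ) (v : V) : 1 ≤ G.leafCount t v := by
  induction t generalizing v with
  | zero => rfl
  | succ t ih =>
    by_cases hv : G.emit v = ∅
    · rw [leafCount, if_neg (Finset.not_nonempty_iff_eq_empty.2 hv)]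
    · obtain ⟨e, he⟩ := Finset.nonempty_iff_ne_empty.2 hv
      rw [G.leafCount_succ_of_ne_empty hv]
      exact (ih (G.r e)).trans
        (Finset.single_le_sum (f := fun e => G.leafCount t (G.r e)) (fun _ _ => Nat.zero_le _) he)

lemma leafCount_le_succ (t : ℕ) (v : V) : G.leafCount t v ≤ G.leafCount (t + 1) v := by
  induction t generalizing v with
  | zero => exact G.one_le_leafCount 1 v
  | succ t ih =>
    by_cases hv : G.emit v = ∅
    · simp only [leafCount, if_neg (Finset.not_nonempty_iff_eq_empty.2 hv), le_refl]
    · rw [G.leafCount_succ_of_ne_empty hv, G.leafCount_succ_of_ne_empty hv]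
      exact Finset.sum_le_sum fun e _ => ih _

lemma leafCount_mono (v : V) : Monotone fun t => G.leafCount t v :=
  monotone_nat_of_le_succ fun t => G.leafCount_le_succ t v

def levelWeight : Multiset (V × ℤ) →+ (ℤ → ℕ) where
  toFun μ k := (μ.map fun p => G.leafCount (k - p.2).toNat p.1).sum
  map_zero' := rfl
  map_add' μ ν := by
    funext k
    simp only [Multiset.map_add, Multiset.sum_add, Pi.add_apply]

lemma levelWeight_apply (μ : Multiset (V × ℤ)) (k : ℤ) :
    G.levelWeight μ k = (μ.map fun p => G.leafCount (k - p.2).toNat p.1).sum :=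
  rfl

lemma one_le_levelWeight {μ : Multiset (V × ℤ)} (hμ : μ ≠ 0) : 1 ≤ G.levelWeight μ := fun k => by
  obtain ⟨p, hp⟩ := Multiset.exists_mem_of_ne_zero hμ
  exact (G.one_le_leafCount _ _).trans
    (Multiset.single_le_sum (fun _ _ => Nat.zero_le _) _ (Multiset.mem_map_of_mem _ hp))

variable [DecidableEq V]

lemma levelWeight_eventuallyEq_of_tStep1 {μ ν : Multiset (V × ℤ)} (h : G.TStep1 μ ν) :
    G.levelWeight μ =ᶠ[atTop] G.levelWeight ν := by
  obtain ⟨v, i, hvi, hv, rfl⟩ := h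
  filter_upwards [eventually_ge_atTop (i + 1)] with k hk
  have hdepth : (k - i).toNat = (k - (i + 1)).toNat + 1 := by omega
  conv_lhs => rw [← Multiset.cons_erase hvi]
  simp only [levelWeight_apply, Multiset.map_cons, Multiset.sum_cons, Multiset.map_add,
    Multiset.sum_add, Multiset.map_map, Function.comp_def, hdepth,
    G.leafCount_succ_of_ne_empty hv, add_comm]
  rfl

noncomputable def germWeight : Multiset (V × ℤ) →+ Germ (atTop : Filter ℤ) ℕ :=
  (Germ.coeAddHom atTop).comp G.levelWeight

lemma tcon_le_ker_germWeight : G.tcon ≤ AddCon.ker G.germWeight :=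
  AddCon.addConGen_le.2 fun _ _ h => (Germ.coe_eq.2 (G.levelWeight_eventuallyEq_of_tStep1 h))

noncomputable def weight : G.TM →+ Germ (atTop : Filter ℤ) ℕ :=
  G.tcon.lift G.germWeight G.tcon_le_ker_germWeight

lemma weight_mk' (μ : Multiset (V × ℤ)) : G.weight (G.tcon.mk' μ) = G.levelWeight μ :=
  rfl

lemma shiftMul_apply (n : ℤ) (μ : Multiset (V × ℤ)) :
    shiftMul n μ = μ.map fun p => (p.1, p.2 + n) :=
  rfl

lemma tshift_mk' (n : ℤ) (μ : Multiset (V × ℤ)) :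
    G.tshift n (G.tcon.mk' μ) = G.tcon.mk' (shiftMul n μ) :=
  rfl

lemma levelWeight_le_levelWeight_shiftMul {n : ℤ} (hn : n ≤ 0) (μ : Multiset (V × ℤ)) :
    G.levelWeight μ ≤ G.levelWeight (shiftMul n μ) := fun k => by
  rw [levelWeight_apply, levelWeight_apply, shiftMul_apply, Multiset.map_map]
  exact Multiset.sum_map_le_sum_map _ _ fun p _ =>
    G.leafCount_mono p.1 (Int.toNat_le_toNat (by omega : k - p.2 ≤ k - (p.2 + n)))

lemma weight_le_weight_tshift {n : ℤ} (hn : n ≤ 0) (a : G.TM) :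
    G.weight a ≤ G.weight (G.tshift n a) := by
  obtain ⟨μ, rfl⟩ := G.tcon.mk'_surjective a
  rw [G.tshift_mk', G.weight_mk', G.weight_mk']
  exact Germ.coe_le.2 (Eventually.of_forall (G.levelWeight_le_levelWeight_shiftMul hn μ))

lemma one_le_weight {x : G.TM} (hx : x ≠ 0) : 1 ≤ G.weight x := by
  obtain ⟨μ, rfl⟩ := G.tcon.mk'_surjective x
  have hμ : μ ≠ 0 := by
    rintro rfl
    exact hx (map_zero _)
  rw [G.weight_mk']
  exact Germ.coe_le.2 (Eventually.of_forall (G.one_le_levelWeight hμ))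

end RFGraph

/-- For any `a ∈ M_E^{gr}` and any negative integer `n`, it is impossible that
`ⁿa < a`, i.e. that `a = ⁿa + x` with `x ≠ 0`. -/
theorem not_shift_lt {V Ed : Type} [DecidableEq V] (G : RFGraph V Ed)
    (a : G.TM) (n : ℤ) (hn : n < 0) :
    ¬ ∃ x : G.TM, x ≠ 0 ∧ a = G.tshift n a + x := by
  rintro ⟨x, hx, hax⟩
  have hsucc : G.weight a + 1 ≤ G.weight a :=
    calc G.weight a + 1 ≤ G.weight (G.tshift n a) + G.weight x :=
          add_le_add (G.weight_le_weight_tshift hn.le a) (G.one_le_weight hx)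
      _ = G.weight a := by rw [← map_add, ← hax]
  have hone_le_zero : ((1 : ℕ) : Germ (atTop : Filter ℤ) ℕ) ≤ (0 : ℕ) := (add_le_iff_nonpos_right _).1 hsucc
  exact Nat.not_succ_le_zero 0 (Germ.const_le_iff.1 hone_le_zero)
end

section
/- Let E be a row-finite graph and u, v ∈ E^0. If there exists a vertex w with paths from both u and v to w (u and v are downward directed), then the ℤ-order-ideals of M_E^{gr} generated by u and by v have nonzero intersection. -/
set_option linter.unusedSectionVars false

/-! The common element is `w(0)`. Each edge `e` gives `r(e)(i+1) ≤ s(e)(i)`, since `r(e)(i+1)` is a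
summand of the defining relation of `s(e)(i)`; along a path from `u` to `w` this yields
`w(n) ≤ u(0)` for some `n`, and shifting by `-n` puts `w(0)` into `⟨u⟩`. Finally `w(0) ≠ 0`
because no defining relation identifies the empty sum with a nonempty one. -/

lemma algLE.trans {M : Type*} [AddCommMonoid M] {a b c : M} (hab : algLE a b) (hbc : algLE b c) :
    algLE a c := by
  obtain ⟨x, rfl⟩ := hab
  obtain ⟨y, rfl⟩ := hbc
  exact ⟨x + y, add_assoc a x y⟩

lemma algLE_sum_of_mem {ι M : Type*} [AddCommMonoid M] {s : Finset ι} {i : ι} (hi : i ∈ s)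
    (f : ι → M) : algLE (f i) (∑ j ∈ s, f j) := by
  classical
  exact ⟨∑ j ∈ s.erase i, f j, (Finset.add_sum_erase s f hi).symm⟩

lemma AddConGen.Rel.eq_zero_iff {M : Type*} [AddCommMonoid M] [PartialOrder M]
    [CanonicallyOrderedAdd M] {r : M → M → Prop} (hr : ∀ a b, r a b → (a = 0 ↔ b = 0))
    {a b : M} (h : AddConGen.Rel r a b) : a = 0 ↔ b = 0 := by
  induction h with
  | of a b hab => exact hr a b hab
  | refl => exact Iff.rfl
  | symm _ ih => exact ih.symm
  | trans _ _ ih₁ ih₂ => exact ih₁.trans ih₂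
  | add _ _ ih₁ ih₂ => simp only [add_eq_zero, ih₁, ih₂]

namespace RFGraph

variable {V Ed : Type} [DecidableEq V] (G : RFGraph V Ed)

lemma tstep1_eq_zero_iff {a b : Multiset (V × ℤ)} (h : G.TStep1 a b) : a = 0 ↔ b = 0 := by
  obtain ⟨v, i, hv, hne, rfl⟩ := h
  refine iff_of_false (fun ha => Multiset.notMem_zero _ (ha ▸ hv)) fun hb => hne ?_
  rw [add_eq_zero, Multiset.map_eq_zero] at hb
  exact Finset.val_eq_zero.mp hb.2

lemma tgen_ne_zero (v : V) (i : ℤ) : G.tgen v i ≠ 0 := fun h =>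
  Multiset.singleton_ne_zero (v, i) <|
    (AddConGen.Rel.eq_zero_iff (fun _ _ => G.tstep1_eq_zero_iff) ((AddCon.eq _).1 h)).2 rfl

lemma tgen_eq_sum {v : V} (hv : G.emit v ≠ ∅) (i : ℤ) :
    G.tgen v i = ∑ e ∈ G.emit v, G.tgen (G.r e) (i + 1) := by
  have hstep : G.TStep1 {(v, i)} ((G.emit v).val.map fun e => (G.r e, i + 1)) :=
    ⟨v, i, Multiset.mem_singleton_self _, hv, by rw [Multiset.erase_singleton, zero_add]⟩
  have hsum : ((G.emit v).val.map fun e => (G.r e, i + 1)) =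
      ∑ e ∈ G.emit v, {(G.r e, i + 1)} := by
    rw [Finset.sum_eq_multiset_sum, ← Multiset.sum_map_singleton ((G.emit v).val.map _),
      Multiset.map_map]
    rfl
  refine ((AddCon.eq _).2 (AddConGen.Rel.of _ _ hstep)).trans ?_
  rw [hsum]
  exact map_sum G.tcon.mk' _ _

lemma tgen_range_algLE_tgen_source (e : Ed) (i : ℤ) :
    algLE (G.tgen (G.r e) (i + 1)) (G.tgen (G.s e) i) := by
  have he : e ∈ G.emit (G.s e) := (G.mem_emit e _).2 rfl
  rw [G.tgen_eq_sum (Finset.ne_empty_of_mem he) i]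
  exact algLE_sum_of_mem he fun f => G.tgen (G.r f) (i + 1)

lemma exists_tgen_algLE_of_reaches {u w : V} (h : G.Reaches u w) (i : ℤ) :
    ∃ j, algLE (G.tgen w j) (G.tgen u i) := by
  induction h using Relation.ReflTransGen.head_induction_on generalizing i with
  | refl => exact ⟨i, 0, (add_zero _).symm⟩
  | head hedge _ ih =>
    obtain ⟨e, rfl, rfl⟩ := hedge
    obtain ⟨j, hj⟩ := ih (i + 1)
    exact ⟨j, hj.trans (G.tgen_range_algLE_tgen_source e i)⟩

lemma tshift_tgen (n : ℤ) (v : V) (i : ℤ) : G.tshift n (G.tgen v i) = G.tgen v (i + n) := rfl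

lemma tgen_mem_genIdeal_of_reaches {u w : V} (h : G.Reaches u w) (i : ℤ) :
    G.tgen w i ∈ G.genIdeal u := by
  rintro I ⟨⟨-, -, hshift, hdown⟩, hu⟩
  obtain ⟨j, hj⟩ := G.exists_tgen_algLE_of_reaches h 0
  have hshifted := hshift (i - j) _ (hdown _ _ hj hu)
  rwa [tshift_tgen, add_sub_cancel] at hshifted

end RFGraph

/-- If `u` and `v` are downward directed (there are paths from both to a common vertex
`w`), then the `ℤ`-order-ideals `⟨u⟩` and `⟨v⟩` have nonzero intersection. -/
theorem downward_directed_ideals {V Ed : Type} [DecidableEq V] (G : RFGraph V Ed)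
    (u v w : V) (hu : G.Reaches u w) (hv : G.Reaches v w) :
    ∃ x : G.TM, x ≠ 0 ∧ x ∈ G.genIdeal u ∧ x ∈ G.genIdeal v :=
  ⟨G.tgen w 0, G.tgen_ne_zero w 0, G.tgen_mem_genIdeal_of_reaches hu 0,
    G.tgen_mem_genIdeal_of_reaches hv 0⟩
end
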